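/- For a two-qubit vector Ψ = A|00⟩ + B|01⟩ + C|10⟩ + D|11⟩ define E_lin(Ψ) = 2|AD − BC|². For every θ ∈ ℝ and all unit vectors α, β ∈ ℂ², the exchange gate U(θ) = cos θ·I₄ + i sin θ·SWAP satisfies E_lin(U(θ)(α ⊗ β)) ≤ (1/2) sin²(2θ), with equality attained at α = e₀ = (1,0), β = e₁ = (0,1). Hence the maximal linear-entropy entangling power of U(θ) over product inputs is exactly (1/2) sin²(2θ); in particular, for √SWAP = U(π/4) it equals 1/2, the maximum possible for a two-qubit gate in this family. -/

import Mathlib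

open Matrix Complex

noncomputable section

/-- The two-qubit SWAP gate on `ℂ² ⊗ ℂ²`. -/
def SWAP : Matrix (Fin 2 × Fin 2) (Fin 2 × Fin 2) ℂ :=
  fun p q => if p = (q.2, q.1) then 1 else 0

/-- The exchange gate `U(θ) = cos θ·I₄ + i sin θ·SWAP`. -/
def U (θ : ℝ) : Matrix (Fin 2 × Fin 2) (Fin 2 × Fin 2) ℂ :=
  (Real.cos θ : ℂ) • (1 : Matrix (Fin 2 × Fin 2) (Fin 2 × Fin 2) ℂ)
    + (Complex.I * (Real.sin θ : ℂ)) • SWAP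

/-- Linear-entropy entanglement of a two-qubit vector `Ψ = A|00⟩+B|01⟩+C|10⟩+D|11⟩`:
`E_lin(Ψ) = 2|AD - BC|²`. -/
def Elin (Ψ : Fin 2 × Fin 2 → ℂ) : ℝ :=
  2 * Complex.normSq (Ψ (0, 0) * Ψ (1, 1) - Ψ (0, 1) * Ψ (1, 0))

/-! On a product input `α ⊗ β` the exchange gate turns the determinant `AD - BC` of the
coefficient matrix into `-(i/2) sin 2θ · (α₀β₁ - α₁β₀)²`, so
`E_lin = ½ sin² 2θ · |α₀β₁ - α₁β₀|⁴`. By Lagrange's identity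
`|α₀β₁ - α₁β₀|² + |⟨β, α⟩|² = ‖α‖² ‖β‖²`, the last factor is at most `1` for unit vectors,
with equality at `e₀, e₁`. -/

open ComplexConjugate

theorem SWAP_mulVec_apply (ψ : Fin 2 × Fin 2 → ℂ) (p : Fin 2 × Fin 2) :
    (SWAP *ᵥ ψ) p = ψ (p.2, p.1) := by
  have hswap : ∀ q : Fin 2 × Fin 2, p = (q.2, q.1) ↔ q = (p.2, p.1) := by
    intro q
    constructor <;> rintro rfl <;> rfl
  simp [SWAP, mulVec, dotProduct, hswap]

theorem U_mulVec_apply (θ : ℝ) (ψ : Fin 2 × Fin 2 → ℂ) (p : Fin 2 × Fin 2) :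
    (U θ *ᵥ ψ) p = Real.cos θ * ψ p + I * Real.sin θ * ψ (p.2, p.1) := by
  simp only [U, add_mulVec, smul_mulVec, one_mulVec, Pi.add_apply, Pi.smul_apply,
    smul_eq_mul, SWAP_mulVec_apply]

theorem Elin_U_mulVec_product (θ : ℝ) (α β : Fin 2 → ℂ) :
    Elin (U θ *ᵥ fun p => α p.1 * β p.2)
      = 1 / 2 * Real.sin (2 * θ) ^ 2 * normSq (α 0 * β 1 - α 1 * β 0) ^ 2 := by
  -- with `x = α₀β₁`, `y = α₁β₀`: `(c + is)² xy - (cx + isy)(cy + isx) = -ics (x - y)²`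
  have hdet : (Real.cos θ * (α 0 * β 0) + I * Real.sin θ * (α 0 * β 0)) *
        (Real.cos θ * (α 1 * β 1) + I * Real.sin θ * (α 1 * β 1)) -
      (Real.cos θ * (α 0 * β 1) + I * Real.sin θ * (α 1 * β 0)) *
        (Real.cos θ * (α 1 * β 0) + I * Real.sin θ * (α 0 * β 1)) =
      -(I * Real.sin (2 * θ) / 2) * (α 0 * β 1 - α 1 * β 0) ^ 2 := by
    rw [Real.sin_two_mul]
    push_cast
    ring
  simp only [Elin, U_mulVec_apply, hdet, map_mul, normSq_neg, map_div₀, map_pow, normSq_I,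
    normSq_ofReal]
  norm_num
  ring

theorem normSq_wedge_add_normSq_inner (a b : Fin 2 → ℂ) :
    normSq (a 0 * b 1 - a 1 * b 0) + normSq (a 0 * conj (b 0) + a 1 * conj (b 1))
      = (∑ i, normSq (a i)) * ∑ i, normSq (b i) := by
  simp only [Fin.sum_univ_two, normSq_apply, sub_re, sub_im, add_re, add_im, mul_re, mul_im,
    conj_re, conj_im]
  ring

theorem normSq_wedge_le (a b : Fin 2 → ℂ) :
    normSq (a 0 * b 1 - a 1 * b 0) ≤ (∑ i, normSq (a i)) * ∑ i, normSq (b i) := by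
  rw [← normSq_wedge_add_normSq_inner]
  exact le_add_of_nonneg_right (normSq_nonneg _)

/-- The maximal linear-entropy entangling power of `U(θ)` over product inputs is
exactly `(1/2)sin²(2θ)`, attained at `α = e₀`, `β = e₁`. -/
theorem max_entangling_power (θ : ℝ) :
    (∀ α β : Fin 2 → ℂ,
      (∑ i, Complex.normSq (α i)) = 1 → (∑ i, Complex.normSq (β i)) = 1 →
      Elin (U θ *ᵥ fun p => α p.1 * β p.2) ≤ (1 / 2) * Real.sin (2 * θ) ^ 2)
    ∧ Elin (U θ *ᵥ fun p => (![1, 0] : Fin 2 → ℂ) p.1 * (![0, 1] : Fin 2 → ℂ) p.2)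
        = (1 / 2) * Real.sin (2 * θ) ^ 2 := by
  refine ⟨fun α β hα hβ => ?_, ?_⟩
  · have hwedge := normSq_wedge_le α β
    rw [hα, hβ, mul_one] at hwedge
    rw [Elin_U_mulVec_product]
    calc 1 / 2 * Real.sin (2 * θ) ^ 2 * normSq (α 0 * β 1 - α 1 * β 0) ^ 2
        ≤ 1 / 2 * Real.sin (2 * θ) ^ 2 * 1 := by
          gcongr
          exact pow_le_one₀ (normSq_nonneg _) hwedge
      _ = 1 / 2 * Real.sin (2 * θ) ^ 2 := mul_one _
  · rw [Elin_U_mulVec_product]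
    norm_num
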